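/- arXiv:1408.4017 — 4 statements merged into one kernel-verified Lean document; each statement's English description precedes it below -/
import Mathlib

section
/- Let Q be an n×n signed permutation matrix with positive part Q₊ and negative part Q₋ (so Q = Q₊ + Q₋), let P be an m×m permutation matrix, A ∈ ℝ^{m×n}, b ∈ ℝ^m, c ∈ ℝⁿ, and q = (e - Qe)/2. Suppose Qᵀc = c, PAQ = A, and P(b - Aq) = b. Define the block matrix Q̃ = [[Q₊, -Q₋], [-Q₋, Q₊]] (size 2n×2n). Then Q̃ is a (nonnegative) permutation matrix and Q̃ᵀ · (c, -c) = (c, -c). -/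
open Matrix BigOperators

/-- A signed permutation matrix: exactly one nonzero entry in each row and
each column, each nonzero entry being `1` or `-1`. -/
def IsSignedPerm {ι : Type*} (Q : Matrix ι ι ℝ) : Prop :=
  (∀ i, ∃! j, Q i j ≠ 0) ∧ (∀ j, ∃! i, Q i j ≠ 0) ∧
  (∀ i j, Q i j ≠ 0 → Q i j = 1 ∨ Q i j = -1)

/-- A permutation matrix: a 0-1 matrix with exactly one `1` in each row and
each column. -/
def IsPermMatrix {ι : Type*} (P : Matrix ι ι ℝ) : Prop :=
  (∀ i j, P i j = 0 ∨ P i j = 1) ∧ (∀ i, ∃! j, P i j = 1) ∧ (∀ j, ∃! i, P i j = 1)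

lemma key_rows {n : ℕ} (Q Qp Qm : Matrix (Fin n) (Fin n) ℝ)
    (hp : ∀ i j, Qp i j = if Q i j = 1 then 1 else 0)
    (hm : ∀ i j, (-Qm) i j = if Q i j = -1 then 1 else 0)
    (hrow : ∀ i, ∃! j, Q i j ≠ 0)
    (hsgn : ∀ i j, Q i j ≠ 0 → Q i j = 1 ∨ Q i j = -1) :
    ∀ x, ∃! y, (Matrix.fromBlocks Qp (-Qm) (-Qm) Qp) x y = 1 := by
  rintro (i | i) <;> obtain ⟨j, hj, hju⟩ := hrow i <;> rcases hsgn i j hj with h1 | h1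
  · refine ⟨Sum.inl j, by simp [hp, h1], ?_⟩
    rintro (l | l) hl
    · have hne : Q i l = 1 := by
        by_contra hne; simp only [Matrix.fromBlocks_apply₁₁, hp, if_neg hne] at hl
        norm_num at hl
      exact congrArg Sum.inl (hju l (by simp [hne]))
    · have hne : Q i l = -1 := by
        by_contra hne; simp only [Matrix.fromBlocks_apply₁₂, hm, if_neg hne] at hl
        norm_num at hl
      have hlj := hju l (by simp [hne])
      rw [hlj, h1] at hne; norm_num at hne
  · refine ⟨Sum.inr j, by simp [Matrix.fromBlocks_apply₁₂, hm, h1], ?_⟩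
    rintro (l | l) hl
    · have hne : Q i l = 1 := by
        by_contra hne; simp only [Matrix.fromBlocks_apply₁₁, hp, if_neg hne] at hl
        norm_num at hl
      have hlj := hju l (by simp [hne])
      rw [hlj, h1] at hne; norm_num at hne
    · have hne : Q i l = -1 := by
        by_contra hne; simp only [Matrix.fromBlocks_apply₁₂, hm, if_neg hne] at hl
        norm_num at hl
      exact congrArg Sum.inr (hju l (by simp [hne]))
  · refine ⟨Sum.inr j, by simp [Matrix.fromBlocks_apply₂₂, hp, h1], ?_⟩
    rintro (l | l) hl
    · have hne : Q i l = -1 := by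
        by_contra hne; simp only [Matrix.fromBlocks_apply₂₁, hm, if_neg hne] at hl
        norm_num at hl
      have hlj := hju l (by simp [hne])
      rw [hlj, h1] at hne; norm_num at hne
    · have hne : Q i l = 1 := by
        by_contra hne; simp only [Matrix.fromBlocks_apply₂₂, hp, if_neg hne] at hl
        norm_num at hl
      exact congrArg Sum.inr (hju l (by simp [hne]))
  · refine ⟨Sum.inl j, by simp [Matrix.fromBlocks_apply₂₁, hm, h1], ?_⟩
    rintro (l | l) hl
    · have hne : Q i l = -1 := by
        by_contra hne; simp only [Matrix.fromBlocks_apply₂₁, hm, if_neg hne] at hl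
        norm_num at hl
      exact congrArg Sum.inl (hju l (by simp [hne]))
    · have hne : Q i l = 1 := by
        by_contra hne; simp only [Matrix.fromBlocks_apply₂₂, hp, if_neg hne] at hl
        norm_num at hl
      have hlj := hju l (by simp [hne])
      rw [hlj, h1] at hne; norm_num at hne

theorem stmt_6 {m n : ℕ} (Q : Matrix (Fin n) (Fin n) ℝ) (hQ : IsSignedPerm Q)
    (Qp Qm : Matrix (Fin n) (Fin n) ℝ)
    (hQp : ∀ i j, Qp i j = max (Q i j) 0) (hQm : ∀ i j, Qm i j = min (Q i j) 0)
    (P : Matrix (Fin m) (Fin m) ℝ) (hP : IsPermMatrix P)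
    (A : Matrix (Fin m) (Fin n) ℝ) (b : Fin m → ℝ) (c : Fin n → ℝ)
    (q : Fin n → ℝ) (hq : q = (1 - Q.mulVec 1) / 2)
    (hc : Q.transpose.mulVec c = c) (hA : P * A * Q = A)
    (hb : P.mulVec (b - A.mulVec q) = b) :
    IsPermMatrix (Matrix.fromBlocks Qp (-Qm) (-Qm) Qp) ∧
    (Matrix.fromBlocks Qp (-Qm) (-Qm) Qp).transpose.mulVec (Sum.elim c (-c)) =
      Sum.elim c (-c) := by
  obtain ⟨hrow, hcol, hsgn⟩ := hQ
  have htri : ∀ i j, Q i j = 0 ∨ Q i j = 1 ∨ Q i j = -1 := by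
    intro i j
    by_cases h : Q i j = 0
    · exact Or.inl h
    · exact Or.inr (hsgn i j h)
  have hp : ∀ i j, Qp i j = if Q i j = 1 then 1 else 0 := by
    intro i j
    rcases htri i j with h | h | h <;> rw [hQp i j, h] <;> norm_num
  have hm : ∀ i j, (-Qm) i j = if Q i j = -1 then 1 else 0 := by
    intro i j
    rcases htri i j with h | h | h <;> rw [Matrix.neg_apply, hQm i j, h] <;> norm_num
  have hsum : ∀ i j, Qp i j + Qm i j = Q i j := by
    intro i j
    rw [hQp, hQm]
    rw [max_add_min]
    ring
  have hc' : ∀ j, (∑ i, Q i j * c i) = c j := by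
    intro j
    have := congrFun hc j
    simpa [Matrix.mulVec, dotProduct, Matrix.transpose] using this
  refine ⟨⟨?_, ?_, ?_⟩, ?_⟩
  · rintro (i | i) (j | j) <;>
      simp only [Matrix.fromBlocks_apply₁₁, Matrix.fromBlocks_apply₁₂,
        Matrix.fromBlocks_apply₂₁, Matrix.fromBlocks_apply₂₂, hp, hm] <;>
      split <;> simp
  · exact key_rows Q Qp Qm hp hm hrow hsgn
  · -- columns: use transpose
    have hpT : ∀ i j, Qp.transpose i j = if Q.transpose i j = 1 then 1 else 0 := by
      intro i j; exact hp j i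
    have hmT : ∀ i j, (-Qm.transpose) i j = if Q.transpose i j = -1 then 1 else 0 := by
      intro i j; exact hm j i
    have hsgnT : ∀ i j, Q.transpose i j ≠ 0 → Q.transpose i j = 1 ∨ Q.transpose i j = -1 := by
      intro i j h; exact hsgn j i h
    have := key_rows Q.transpose Qp.transpose Qm.transpose hpT hmT hcol hsgnT
    intro y
    obtain ⟨x, hx, hxu⟩ := this y
    refine ⟨x, ?_, ?_⟩
    · rcases x with x | x <;> rcases y with y | y <;> simpa using hx
    · intro z hz
      refine hxu z ?_
      rcases z with z | z <;> rcases y with y | y <;> simpa using hz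
  · funext x
    rcases x with j | j
    · simp only [Matrix.mulVec, dotProduct, Matrix.transpose_apply,
        Fintype.sum_sum_type, Sum.elim_inl, Sum.elim_inr,
        Matrix.fromBlocks_apply₁₁, Matrix.fromBlocks_apply₂₁, Matrix.neg_apply,
        Pi.neg_apply]
      rw [← hc' j, ← Finset.sum_add_distrib]
      refine Finset.sum_congr rfl fun i _ => ?_
      linear_combination c i * hsum i j
    · simp only [Matrix.mulVec, dotProduct, Matrix.transpose_apply,
        Fintype.sum_sum_type, Sum.elim_inl, Sum.elim_inr,
        Matrix.fromBlocks_apply₁₂, Matrix.fromBlocks_apply₂₂, Matrix.neg_apply,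
        Pi.neg_apply]
      rw [← hc' j, ← Finset.sum_add_distrib, ← Finset.sum_neg_distrib]
      refine Finset.sum_congr rfl fun i _ => ?_
      linear_combination (-(c i)) * hsum i j
end

section
/- Let Q be an n×n signed permutation matrix with positive part Q₊ and negative part Q₋, P an m×m permutation matrix, A ∈ ℝ^{m×n}, and suppose PAQ = A. Define P̃ = [[P, 0], [0, (Q₊ - Q₋)⁻¹]] and Q̃ = [[Q₊, -Q₋], [-Q₋, Q₊]]. Then P̃ · [[A, -A], [I, I]] · Q̃ = [[A, -A], [I, I]]. -/
open Matrix BigOperators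

theorem stmt_7 {m n : ℕ} (Q : Matrix (Fin n) (Fin n) ℝ) (hQ : IsSignedPerm Q)
    (Qp Qm : Matrix (Fin n) (Fin n) ℝ)
    (hQp : ∀ i j, Qp i j = max (Q i j) 0) (hQm : ∀ i j, Qm i j = min (Q i j) 0)
    (P : Matrix (Fin m) (Fin m) ℝ) (hP : IsPermMatrix P)
    (A : Matrix (Fin m) (Fin n) ℝ) (hA : P * A * Q = A) :
    Matrix.fromBlocks P 0 0 (Qp - Qm)⁻¹ *
        Matrix.fromBlocks A (-A) (1 : Matrix (Fin n) (Fin n) ℝ) 1 *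
        Matrix.fromBlocks Qp (-Qm) (-Qm) Qp =
      Matrix.fromBlocks A (-A) (1 : Matrix (Fin n) (Fin n) ℝ) 1 := by
  have hQsum : Qp + Qm = Q := by
    ext i j
    simp only [Matrix.add_apply, hQp, hQm]
    simpa using max_add_min (Q i j) 0
  have habs : ∀ i j, (Qp - Qm) i j = |Q i j| := by
    intro i j
    simp only [Matrix.sub_apply, hQp, hQm]
    rcases le_total (Q i j) 0 with h | h
    · rw [max_eq_right h, min_eq_left h, abs_of_nonpos h]; ring
    · rw [max_eq_left h, min_eq_right h, abs_of_nonneg h]; ring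
  have hBBt : (Qp - Qm) * (Qp - Qm)ᵀ = 1 := by
    ext i k
    simp only [Matrix.mul_apply, Matrix.transpose_apply, Matrix.one_apply]
    by_cases hik : i = k
    · subst hik
      obtain ⟨j0, hj0, huniq⟩ := hQ.1 i
      rw [if_pos rfl, Finset.sum_eq_single j0]
      · rw [habs]
        rcases hQ.2.2 i j0 hj0 with h | h <;> simp [h]
      · intro j _ hj
        have : Q i j = 0 := by
          by_contra hne; exact hj (huniq j hne)
        simp [habs, this]
      · simp
    · rw [if_neg hik]
      apply Finset.sum_eq_zero
      intro j _
      rw [habs, habs]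
      by_cases h1 : Q i j = 0
      · simp [h1]
      by_cases h2 : Q k j = 0
      · simp [h2]
      · obtain ⟨i0, _, hu⟩ := hQ.2.1 j
        exact absurd ((hu i h1).trans (hu k h2).symm) hik
  have hinv : (Qp - Qm)⁻¹ = (Qp - Qm)ᵀ := Matrix.inv_eq_right_inv hBBt
  have hBinvB : (Qp - Qm)⁻¹ * (Qp - Qm) = 1 := by
    rw [hinv]; exact mul_eq_one_comm.mp hBBt
  have hA' : P * A * (Qp + Qm) = A := by rw [hQsum]; exact hA
  rw [Matrix.fromBlocks_multiply, Matrix.fromBlocks_multiply]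
  simp only [Matrix.zero_mul, Matrix.mul_one, add_zero, zero_add]
  rw [Matrix.fromBlocks_inj]
  have e1 : P * A * Qp + P * -A * -Qm = P * A * (Qp + Qm) := by
    simp only [Matrix.mul_neg, Matrix.neg_mul, neg_neg, Matrix.mul_add]
  have e2 : P * A * -Qm + P * -A * Qp = -(P * A * (Qp + Qm)) := by
    simp only [Matrix.mul_neg, Matrix.neg_mul, neg_neg, Matrix.mul_add]
    abel
  have e3 : (Qp - Qm)⁻¹ * Qp + (Qp - Qm)⁻¹ * -Qm = (Qp - Qm)⁻¹ * (Qp - Qm) := by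
    simp only [Matrix.mul_neg, Matrix.mul_sub]
    abel
  have e4 : (Qp - Qm)⁻¹ * -Qm + (Qp - Qm)⁻¹ * Qp = (Qp - Qm)⁻¹ * (Qp - Qm) := by
    simp only [Matrix.mul_neg, Matrix.mul_sub]
    abel
  exact ⟨e1.trans hA', e2.trans (by rw [hA']), e3.trans hBinvB, e4.trans hBinvB⟩
end

section
/- Let Q₁, Q₂, Q₃, Q₄ be n×n matrices with entries in {0,1} such that the block matrix [[Q₁, Q₂], [Q₃, Q₄]] is a 2n×2n permutation matrix, and suppose there exists an n×n permutation matrix P₂ with P₂(Q₁ + Q₃) = I and P₂(Q₂ + Q₄) = I. Then Q₁ = Q₄ and Q₂ = Q₃. -/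
open Matrix BigOperators

lemma perm_transpose_mul {ι : Type*} [Fintype ι] [DecidableEq ι]
    {P : Matrix ι ι ℝ} (hP : IsPermMatrix P) : Pᵀ * P = 1 := by
  obtain ⟨h01, hrow, hcol⟩ := hP
  ext j k
  simp only [Matrix.mul_apply, Matrix.transpose_apply, Matrix.one_apply]
  rcases eq_or_ne j k with rfl | hjk
  · rw [if_pos rfl]
    obtain ⟨i₀, hi₀, huniq⟩ := hcol j
    rw [Finset.sum_eq_single i₀]
    · rw [hi₀]; ring
    · intro i _ hne
      rcases h01 i j with h | h
      · rw [h]; ring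
      · exact absurd (huniq i h) hne
    · intro h; exact absurd (Finset.mem_univ i₀) h
  · rw [if_neg hjk]
    apply Finset.sum_eq_zero
    intro i _
    rcases h01 i j with h | h
    · rw [h]; ring
    rcases h01 i k with h' | h'
    · rw [h']; ring
    · obtain ⟨j', hj', hu⟩ := hrow i
      exact absurd ((hu j h).trans (hu k h').symm) hjk

theorem stmt_9 {n : ℕ} (Q₁ Q₂ Q₃ Q₄ : Matrix (Fin n) (Fin n) ℝ)
    (h01 : ∀ i j, (Q₁ i j = 0 ∨ Q₁ i j = 1) ∧ (Q₂ i j = 0 ∨ Q₂ i j = 1) ∧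
      (Q₃ i j = 0 ∨ Q₃ i j = 1) ∧ (Q₄ i j = 0 ∨ Q₄ i j = 1))
    (hperm : IsPermMatrix (Matrix.fromBlocks Q₁ Q₂ Q₃ Q₄))
    (P₂ : Matrix (Fin n) (Fin n) ℝ) (hP₂ : IsPermMatrix P₂)
    (h1 : P₂ * (Q₁ + Q₃) = 1) (h2 : P₂ * (Q₂ + Q₄) = 1) :
    Q₁ = Q₄ ∧ Q₂ = Q₃ := by
  have hPt := perm_transpose_mul hP₂
  have e1 : Q₁ + Q₃ = P₂ᵀ := by
    calc Q₁ + Q₃ = 1 * (Q₁ + Q₃) := (one_mul _).symm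
    _ = P₂ᵀ * (P₂ * (Q₁ + Q₃)) := by rw [← hPt, Matrix.mul_assoc]
    _ = P₂ᵀ := by rw [h1, mul_one]
  have e2 : Q₂ + Q₄ = P₂ᵀ := by
    calc Q₂ + Q₄ = 1 * (Q₂ + Q₄) := (one_mul _).symm
    _ = P₂ᵀ * (P₂ * (Q₂ + Q₄)) := by rw [← hPt, Matrix.mul_assoc]
    _ = P₂ᵀ := by rw [h2, mul_one]
  have hsum : ∀ i j, Q₁ i j + Q₃ i j = Q₂ i j + Q₄ i j := by
    intro i j
    have := congrFun (congrFun (e1.trans e2.symm) i) j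
    simpa using this
  obtain ⟨hE, hrow, hcol⟩ := hperm
  constructor
  · ext i j
    rcases (h01 i j).1 with ha | ha
    · -- Q₁ i j = 0 ⇒ Q₄ i j = 0
      rcases (h01 i j).2.2.2 with h4 | h4
      · rw [ha, h4]
      · exfalso
        obtain ⟨c, hc, hu⟩ := hrow (Sum.inr i)
        have hcj : c = Sum.inr j := (hu _ (by simpa using h4)).symm
        have h3 : Q₃ i j = 0 := by
          rcases (h01 i j).2.2.1 with h | h
          · exact h
          · have h' := hu (Sum.inl j) (by simpa using h)
            rw [hcj] at h'
            exact absurd h' (by simp)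
        have hs := hsum i j
        rw [ha, h3, h4] at hs
        rcases (h01 i j).2.1 with h | h <;> rw [h] at hs <;> norm_num at hs
    · -- Q₁ i j = 1 ⇒ Q₄ i j = 1
      obtain ⟨r, hr, hu⟩ := hcol (Sum.inl j)
      have hri : r = Sum.inl i := (hu _ (by simpa using ha)).symm
      have h3 : Q₃ i j = 0 := by
        rcases (h01 i j).2.2.1 with h | h
        · exact h
        · have h' := hu (Sum.inr i) (by simpa using h)
          rw [hri] at h'
          exact absurd h' (by simp)
      obtain ⟨c, hc, hu'⟩ := hrow (Sum.inl i)
      have hcj : c = Sum.inl j := (hu' _ (by simpa using ha)).symm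
      have hb : Q₂ i j = 0 := by
        rcases (h01 i j).2.1 with h | h
        · exact h
        · have h' := hu' (Sum.inr j) (by simpa using h)
          rw [hcj] at h'
          exact absurd h' (by simp)
      have hs := hsum i j
      rw [ha, h3, hb] at hs
      linarith
  · ext i j
    rcases (h01 i j).2.1 with hb | hb
    · -- Q₂ i j = 0 ⇒ Q₃ i j = 0
      rcases (h01 i j).2.2.1 with h3 | h3
      · rw [hb, h3]
      · exfalso
        obtain ⟨c, hc, hu⟩ := hrow (Sum.inr i)
        have hcj : c = Sum.inl j := (hu _ (by simpa using h3)).symm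
        have h4 : Q₄ i j = 0 := by
          rcases (h01 i j).2.2.2 with h | h
          · exact h
          · have h' := hu (Sum.inr j) (by simpa using h)
            rw [hcj] at h'
            exact absurd h' (by simp)
        have hs := hsum i j
        rw [hb, h3, h4] at hs
        rcases (h01 i j).1 with h | h <;> rw [h] at hs <;> norm_num at hs
    · -- Q₂ i j = 1 ⇒ Q₃ i j = 1
      obtain ⟨c, hc, hu⟩ := hrow (Sum.inl i)
      have hcj : c = Sum.inr j := (hu _ (by simpa using hb)).symm
      have ha : Q₁ i j = 0 := by
        rcases (h01 i j).1 with h | h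
        · exact h
        · have h' := hu (Sum.inl j) (by simpa using h)
          rw [hcj] at h'
          exact absurd h' (by simp)
      obtain ⟨r, hr, hu'⟩ := hcol (Sum.inr j)
      have hri : r = Sum.inl i := (hu' _ (by simpa using hb)).symm
      have h4 : Q₄ i j = 0 := by
        rcases (h01 i j).2.2.2 with h | h
        · exact h
        · have h' := hu' (Sum.inr i) (by simpa using h)
          rw [hri] at h'
          exact absurd h' (by simp)
      have hs := hsum i j
      rw [hb, ha, h4] at hs
      linarith
end

section
/- Every affine map x ↦ Qx + q from ℝⁿ to ℝⁿ with Q invertible that maps the set {0,1}ⁿ bijectively onto itself satisfies: Q is a signed permutation matrix and q = (e - Qe)/2. -/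
open Matrix BigOperators

theorem stmt_18 {n : ℕ} (Q : Matrix (Fin n) (Fin n) ℝ) (q : Fin n → ℝ)
    (hdet : IsUnit Q)
    (hbij : Set.BijOn (fun x => Q.mulVec x + q)
      {x : Fin n → ℝ | ∀ i, x i = 0 ∨ x i = 1}
      {x : Fin n → ℝ | ∀ i, x i = 0 ∨ x i = 1}) :
    IsSignedPerm Q ∧ q = (1 - Q.mulVec 1) / 2 := by
  have hmaps := hbij.mapsTo
  have key : ∀ (S : Finset (Fin n)) (i : Fin n),
      (∑ j ∈ S, Q i j) + q i = 0 ∨ (∑ j ∈ S, Q i j) + q i = 1 := by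
    intro S i
    have hx : (fun j => if j ∈ S then (1:ℝ) else 0) ∈
        {x : Fin n → ℝ | ∀ i, x i = 0 ∨ x i = 1} := by
      intro k; by_cases h : k ∈ S <;> simp [h]
    have h := hmaps hx i
    simpa [Matrix.mulVec, dotProduct, mul_ite, mul_one, mul_zero,
      Finset.sum_ite_mem, Finset.univ_inter] using h
  have hq0 : ∀ i, q i = 0 ∨ q i = 1 := by
    intro i; simpa using key ∅ i
  have key1 : ∀ i j, Q i j + q i = 0 ∨ Q i j + q i = 1 := by
    intro i j; simpa using key {j} i
  -- row uniqueness (at most one nonzero per row)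
  have rowExcl : ∀ i j k, j ≠ k → Q i j ≠ 0 → Q i k ≠ 0 → False := by
    intro i j k hjk hj hk
    have h2 : (Q i j + Q i k) + q i = 0 ∨ (Q i j + Q i k) + q i = 1 := by
      have := key {j, k} i
      rwa [Finset.sum_pair hjk] at this
    rcases hq0 i with h0 | h0 <;> rcases key1 i j with h1 | h1 <;>
      rcases key1 i k with h3 | h3 <;> rcases h2 with h4 | h4 <;>
      first
        | exact hj (by linarith)
        | exact hk (by linarith)
        | linarith
  -- row existence
  have hsurj : Function.Surjective Q.mulVec := by
    rw [Matrix.mulVec_surjective_iff_isUnit]; exact hdet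
  have rowEx : ∀ i, ∃ j, Q i j ≠ 0 := by
    intro i
    by_contra hall
    push_neg at hall
    obtain ⟨x, hx⟩ := hsurj (Pi.single i 1)
    have : Q.mulVec x i = 1 := by
      have := congrFun hx i; simpa [Matrix.mulVec] using this
    rw [Matrix.mulVec, dotProduct] at this
    simp only [hall, zero_mul, Finset.sum_const_zero] at this
    exact one_ne_zero this.symm
  have hrowU : ∀ i, ∃! j, Q i j ≠ 0 := by
    intro i
    obtain ⟨j, hj⟩ := rowEx i
    exact ⟨j, hj, fun k hk => by
      by_contra hne
      exact rowExcl i k j hne hk hj⟩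
  -- column existence
  have hsurj' : Function.Surjective (Q.vecMul) := by
    rw [Matrix.vecMul_surjective_iff_isUnit]; exact hdet
  have colEx : ∀ j, ∃ i, Q i j ≠ 0 := by
    intro j
    by_contra hall
    push_neg at hall
    obtain ⟨u, hu⟩ := hsurj' (Pi.single j 1)
    have : Q.vecMul u j = 1 := by
      have := congrFun hu j; simpa [Matrix.vecMul] using this
    rw [Matrix.vecMul, dotProduct] at this
    simp only [hall, mul_zero, Finset.sum_const_zero] at this
    exact one_ne_zero this.symm
  -- column uniqueness
  have colU : ∀ j i₁ i₂, Q i₁ j ≠ 0 → Q i₂ j ≠ 0 → i₁ = i₂ := by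
    intro j i₁ i₂ h1 h2
    by_contra hne
    set u : Fin n → ℝ := fun i =>
      Q i₂ j * (if i = i₁ then 1 else 0) - Q i₁ j * (if i = i₂ then 1 else 0) with hu_def
    have hvm : Q.vecMul u = 0 := by
      funext k
      rw [Matrix.vecMul, dotProduct, Pi.zero_apply]
      simp only [hu_def, sub_mul, mul_assoc, Finset.sum_sub_distrib,
        ← Finset.mul_sum]
      have e1 : ∑ i, (if i = i₁ then (1:ℝ) else 0) * Q i k = Q i₁ k := by
        rw [Finset.sum_eq_single i₁]
        · simp
        · intro b _ hb; simp [hb]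
        · simp
      have e2 : ∑ i, (if i = i₂ then (1:ℝ) else 0) * Q i k = Q i₂ k := by
        rw [Finset.sum_eq_single i₂]
        · simp
        · intro b _ hb; simp [hb]
        · simp
      rw [e1, e2]
      by_cases hk : k = j
      · subst hk; ring
      · have z1 : Q i₁ k = 0 := by
          by_contra hz; exact rowExcl i₁ k j hk hz h1
        have z2 : Q i₂ k = 0 := by
          by_contra hz; exact rowExcl i₂ k j hk hz h2
        simp [z1, z2]
    -- vecMul injective from IsUnit
    have hQB : Q * Q⁻¹ = 1 :=
      Q.mul_nonsing_inv ((Matrix.isUnit_iff_isUnit_det Q).mp hdet)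
    have : u = 0 := by
      have h := congrArg (fun w => Matrix.vecMul w Q⁻¹) hvm
      simpa [Matrix.vecMul_vecMul, hQB, Matrix.vecMul_one, Matrix.zero_vecMul] using h
    have hu1 : u i₁ = Q i₂ j := by
      simp [hu_def, hne]
    rw [this] at hu1
    exact h2 (by simpa using hu1.symm)
  have hcolU : ∀ j, ∃! i, Q i j ≠ 0 := by
    intro j
    obtain ⟨i, hi⟩ := colEx j
    exact ⟨i, hi, fun k hk => colU j k i hk hi⟩
  -- signs
  have hsign : ∀ i j, Q i j ≠ 0 → Q i j = 1 ∨ Q i j = -1 := by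
    intro i j hij
    rcases hq0 i with h0 | h0 <;> rcases key1 i j with h1 | h1 <;>
      first
        | exact absurd (by linarith : Q i j = 0) hij
        | (left; linarith)
        | (right; linarith)
  refine ⟨⟨hrowU, hcolU, hsign⟩, ?_⟩
  funext i
  obtain ⟨j, hj, hju⟩ := hrowU i
  have hsum : Q.mulVec 1 i = Q i j := by
    rw [Matrix.mulVec, dotProduct]
    simp only [Pi.one_apply, mul_one]
    rw [Finset.sum_eq_single j]
    · intro b _ hb
      by_contra hz
      exact hb (hju b hz)
    · simp
  simp only [Pi.div_apply, Pi.sub_apply, Pi.one_apply, Pi.ofNat_apply, hsum]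
  rcases hq0 i with h0 | h0 <;> rcases key1 i j with h1 | h1 <;>
    first
      | exact absurd (by linarith : Q i j = 0) hj
      | linarith
end
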